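/- Let b be a prime, m ≥ 1, and let P = {(n/b^m, ν(n)) : n = 0,1,…,b^m−1} be a NUT net whose coefficient c_{1,1} equals 1. Then disp(P) ≥ max_{w=0,1,…,b−1} ((w+1)/b)·((b−w)/b^m), and this maximum equals (1/2)(b/2 + 1)(1/b^m) if b is even and (1/b)((b+1)/2)²(1/b^m) if b is odd. -/
import Mathlib


/-- The set of areas of axis-parallel half-open boxes `[x1,y1) x [x2,y2)` inside `[0,1]^2`
containing no point of `P`. -/
def emptyBoxAreas (P : Set (ℝ × ℝ)) : Set ℝ :=
  { A | ∃ x₁ y₁ x₂ y₂ : ℝ,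
      0 ≤ x₁ ∧ x₁ ≤ y₁ ∧ y₁ ≤ 1 ∧ 0 ≤ x₂ ∧ x₂ ≤ y₂ ∧ y₂ ≤ 1 ∧
      (∀ p ∈ P, p ∉ Set.Ico x₁ y₁ ×ˢ Set.Ico x₂ y₂) ∧
      A = (y₁ - x₁) * (y₂ - x₂) }

/-- The dispersion of a point set `P ⊆ [0,1]^2`: the supremum of areas of empty
axis-parallel boxes. -/
noncomputable def disp (P : Set (ℝ × ℝ)) : ℝ := sSup (emptyBoxAreas P)
/-- The `i`-th digit (1-based) of `n` in base `b`, with the convention that the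
`0`-th digit is `0`. -/
def nthDigit (b n i : ℕ) : ℕ := if i = 0 then 0 else n / b ^ (i - 1) % b
/-- The second-coordinate map `ν` of a NUT net with coefficient matrix `c`:
`ν(n) = Σ_{i=1}^m ((c_{i,i}e_i + c_{i,i+1}e_{i+1} + ⋯ + c_{i,m}e_m) mod b)/b^i`. -/
noncomputable def nutMap (b m : ℕ) (c : ℕ → ℕ → ℕ) (n : ℕ) : ℝ :=
  ∑ i ∈ Finset.Icc 1 m,
    (((∑ j ∈ Finset.Icc i m, c i j * nthDigit b n j) % b : ℕ) : ℝ) / (b : ℝ) ^ i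

/-- Lower bound for the dispersion of `b`-adic NUT nets with `c_{1,1} = 1`:
`disp(P) ≥ max_{w=0,…,b−1} ((w+1)/b)·((b−w)/b^m)`, and this maximum equals
`(1/2)(b/2 + 1)(1/b^m)` if `b` is even and `(1/b)((b+1)/2)²(1/b^m)` if `b` is odd. -/
lemma aux_nut (b m : ℕ) (hb : 1 ≤ b) (hm : 1 ≤ m) (c : ℕ → ℕ → ℕ) (hc11 : c 1 1 = 1)
    (n : ℕ) (hn : n < b) : nutMap b m c n = (n : ℝ) / b := by
  have hdig0 : ∀ j, 2 ≤ j → nthDigit b n j = 0 := by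
    intro j hj
    have h1 : b ≤ b ^ (j - 1) := by
      calc b = b ^ 1 := (pow_one b).symm
      _ ≤ b ^ (j - 1) := Nat.pow_le_pow_right hb (by omega)
    unfold nthDigit
    rw [if_neg (by omega), Nat.div_eq_of_lt (lt_of_lt_of_le hn h1), Nat.zero_mod]
  have hdig1 : nthDigit b n 1 = n := by
    unfold nthDigit; simp [Nat.mod_eq_of_lt hn]
  unfold nutMap
  rw [Finset.sum_eq_single_of_mem 1 (Finset.mem_Icc.mpr ⟨le_refl 1, hm⟩)]
  · have hsum : (∑ j ∈ Finset.Icc 1 m, c 1 j * nthDigit b n j) = n := by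
      rw [Finset.sum_eq_single_of_mem 1 (Finset.mem_Icc.mpr ⟨le_refl 1, hm⟩)]
      · rw [hdig1, hc11, one_mul]
      · intro j hj hj1
        rw [hdig0 j (by have := Finset.mem_Icc.mp hj; omega), mul_zero]
    rw [hsum, Nat.mod_eq_of_lt hn, pow_one]
  · intro i hi hi1
    have hsum : (∑ j ∈ Finset.Icc i m, c i j * nthDigit b n j) = 0 := by
      apply Finset.sum_eq_zero; intro j hj
      rw [hdig0 j (by have h2 := Finset.mem_Icc.mp hj; have h3 := Finset.mem_Icc.mp hi; omega),
        mul_zero]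
    rw [hsum]; simp

set_option maxHeartbeats 1000000 in
theorem disp_NUT_c11_ge (b m : ℕ) (hb : Nat.Prime b) (hm : 1 ≤ m) (c : ℕ → ℕ → ℕ)
    (hc : ∀ i j, c i j < b) (hdiag : ∀ i, 1 ≤ i → i ≤ m → c i i ≠ 0)
    (hc11 : c 1 1 = 1)
    (P : Set (ℝ × ℝ))
    (hP : P = {p : ℝ × ℝ | ∃ n < b ^ m, p = ((n : ℝ) / (b : ℝ) ^ m, nutMap b m c n)}) :
    disp P ≥ (Finset.range b).sup' (Finset.nonempty_range_iff.mpr hb.ne_zero)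
        (fun w => ((w : ℝ) + 1) / (b : ℝ) * (((b : ℝ) - (w : ℝ)) / (b : ℝ) ^ m)) ∧
    (Finset.range b).sup' (Finset.nonempty_range_iff.mpr hb.ne_zero)
        (fun w => ((w : ℝ) + 1) / (b : ℝ) * (((b : ℝ) - (w : ℝ)) / (b : ℝ) ^ m)) =
      (if Even b then 1 / 2 * ((b : ℝ) / 2 + 1) * (1 / (b : ℝ) ^ m)
       else 1 / (b : ℝ) * (((b : ℝ) + 1) / 2) ^ 2 * (1 / (b : ℝ) ^ m)) := by
  have hb2 : 2 ≤ b := hb.two_le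
  have hbR : (2 : ℝ) ≤ (b : ℝ) := by exact_mod_cast hb2
  have hbpos : (0 : ℝ) < (b : ℝ) := by linarith
  have hbmpos : (0 : ℝ) < (b : ℝ) ^ m := by positivity
  have hbbm : (b : ℝ) ≤ (b : ℝ) ^ m := by
    calc (b : ℝ) = (b : ℝ) ^ 1 := (pow_one _).symm
    _ ≤ (b : ℝ) ^ m := pow_le_pow_right₀ (by linarith) hm
  constructor
  · -- lower bound on dispersion
    rw [ge_iff_le]
    apply Finset.sup'_le
    intro w hw
    have hwb : w < b := Finset.mem_range.mp hw
    have hwbR : (w : ℝ) < (b : ℝ) := by exact_mod_cast hwb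
    unfold disp
    -- nonempty and bddAbove
    have hne : (emptyBoxAreas P).Nonempty := by
      refine ⟨0, 0, 0, 0, 0, le_refl _, le_refl _, by norm_num, le_refl _, le_refl _,
        by norm_num, ?_, by ring⟩
      intro p _ hp
      simp [Set.Ico_self] at hp
    have hbdd : BddAbove (emptyBoxAreas P) := by
      refine ⟨1, ?_⟩
      rintro A ⟨x₁, y₁, x₂, y₂, h1, h2, h3, h4, h5, h6, _, rfl⟩
      nlinarith
    rw [Real.le_sSup_iff hbdd hne]
    intro ε hε
    set δ : ℝ := min (-ε / 2) (((w : ℝ) + 1) / (2 * b)) with hδdef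
    have hδpos : 0 < δ := by
      apply lt_min (by linarith)
      positivity
    have hδ1 : δ ≤ -ε / 2 := min_le_left _ _
    have hδ2 : δ ≤ ((w : ℝ) + 1) / (2 * b) := min_le_right _ _
    refine ⟨((b : ℝ) - w) / (b : ℝ) ^ m * (((w : ℝ) + 1) / b - δ), ?_, ?_⟩
    · -- membership: the empty box
      refine ⟨0, ((b : ℝ) - w) / (b : ℝ) ^ m, 1 - ((w : ℝ) + 1) / b + δ, 1,
        le_refl _, div_nonneg (by linarith) (le_of_lt hbmpos), ?_, ?_, ?_, le_refl _, ?_, by ring⟩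
      · rw [div_le_one hbmpos]; linarith
      · have : ((w : ℝ) + 1) / b ≤ 1 := by rw [div_le_one hbpos]; exact_mod_cast hwb
        linarith
      · have : δ < ((w : ℝ) + 1) / b := by
          have : ((w : ℝ) + 1) / (2 * b) < ((w : ℝ) + 1) / b := by
            apply div_lt_div_of_pos_left (by positivity) hbpos
            linarith
          linarith
        linarith
      · -- no point of P inside
        subst hP
        rintro p ⟨n, hn, rfl⟩ hmem
        obtain ⟨⟨_, hx⟩, hy, _⟩ := hmem
        simp only at hx hy
        have hnlt : (n : ℝ) < (b : ℝ) - w := by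
          rw [div_lt_div_iff₀ hbmpos hbmpos] at hx
          nlinarith
        have hnb : n < b := by
          have : (n : ℝ) < (b : ℝ) := by linarith [Nat.cast_nonneg (α := ℝ) w]
          exact_mod_cast this
        rw [aux_nut b m (by omega) hm c hc11 n hnb] at hy
        -- hy : 1 - (w+1)/b + δ ≤ n / b
        have hub : (b : ℝ) - ((w : ℝ) + 1) + δ * b ≤ (n : ℝ) := by
          have h := mul_le_mul_of_nonneg_right hy (le_of_lt hbpos)
          have hb0 : (b : ℝ) ≠ 0 := ne_of_gt hbpos
          field_simp at h
          linarith
        have : (b : ℝ) - (w : ℝ) - 1 < (n : ℝ) := by nlinarith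
        have hcontra : (b : ℝ) < (n : ℝ) + (w : ℝ) + 1 := by linarith
        have : b < n + w + 1 := by exact_mod_cast hcontra
        have : (n : ℝ) + (w : ℝ) < (b : ℝ) := by linarith
        have : n + w < b := by exact_mod_cast this
        omega
    · -- area close enough
      have hfrac0 : (0 : ℝ) ≤ ((b : ℝ) - w) / (b : ℝ) ^ m := by
        apply div_nonneg _ (le_of_lt hbmpos); linarith
      have hfrac1 : ((b : ℝ) - w) / (b : ℝ) ^ m ≤ 1 := by
        rw [div_le_one hbmpos]; linarith [Nat.cast_nonneg (α := ℝ) w]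
      have expand : ((w : ℝ) + 1) / b * (((b : ℝ) - w) / (b : ℝ) ^ m) + ε <
          ((b : ℝ) - w) / (b : ℝ) ^ m * (((w : ℝ) + 1) / b - δ) := by
        have : ((b : ℝ) - w) / (b : ℝ) ^ m * δ ≤ δ := by nlinarith
        nlinarith
      exact expand
  · -- value of the maximum
    set w₀ : ℕ := (b - 1) / 2 with hw₀def
    have hw₀mem : w₀ ∈ Finset.range b := Finset.mem_range.mpr (by omega)
    have hkey : ∀ w ∈ Finset.range b,
        ((w : ℝ) + 1) / (b : ℝ) * (((b : ℝ) - (w : ℝ)) / (b : ℝ) ^ m) ≤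
        ((w₀ : ℝ) + 1) / (b : ℝ) * (((b : ℝ) - (w₀ : ℝ)) / (b : ℝ) ^ m) := by
      intro w hw
      have hwb : w < b := Finset.mem_range.mp hw
      have hZ : ((w : ℤ) + 1) * ((b : ℤ) - w) ≤ ((w₀ : ℤ) + 1) * ((b : ℤ) - w₀) := by
        rcases Nat.even_or_odd b with ⟨k, hk⟩ | ⟨k, hk⟩
        · have hbk : (b : ℤ) = 2 * w₀ + 2 := by omega
          have hsq : ((w : ℤ) - w₀) * ((w : ℤ) - w₀ - 1) ≥ 0 := by
            rcases le_or_gt (w : ℤ) (w₀ : ℤ) with h | h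
            · nlinarith
            · exact mul_nonneg (by linarith) (by linarith)
          nlinarith
        · have hbk : (b : ℤ) = 2 * w₀ + 1 := by omega
          nlinarith [sq_nonneg ((w : ℤ) - w₀)]
      have hR : ((w : ℝ) + 1) * ((b : ℝ) - w) ≤ ((w₀ : ℝ) + 1) * ((b : ℝ) - w₀) := by
        exact_mod_cast hZ
      rw [div_mul_div_comm, div_mul_div_comm,
        div_le_div_iff₀ (mul_pos hbpos hbmpos) (mul_pos hbpos hbmpos)]
      exact mul_le_mul_of_nonneg_right hR (le_of_lt (mul_pos hbpos hbmpos))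
    have hsup : (Finset.range b).sup' (Finset.nonempty_range_iff.mpr hb.ne_zero)
        (fun w => ((w : ℝ) + 1) / (b : ℝ) * (((b : ℝ) - (w : ℝ)) / (b : ℝ) ^ m)) =
        ((w₀ : ℝ) + 1) / (b : ℝ) * (((b : ℝ) - (w₀ : ℝ)) / (b : ℝ) ^ m) :=
      le_antisymm (Finset.sup'_le _ _ hkey) (Finset.le_sup' (fun w : ℕ => ((w : ℝ) + 1) / (b : ℝ) * (((b : ℝ) - (w : ℝ)) / (b : ℝ) ^ m)) hw₀mem)
    rw [hsup]
    have hbne : (b : ℝ) ≠ 0 := ne_of_gt hbpos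
    rcases Nat.even_or_odd b with hev | hod
    · rw [if_pos hev]
      obtain ⟨k, hk⟩ := hev
      have hbk : (b : ℝ) = 2 * (w₀ : ℝ) + 2 := by
        have : b = 2 * w₀ + 2 := by omega
        exact_mod_cast this
      have hmain : ((w₀ : ℝ) + 1) / b * ((b : ℝ) - (w₀ : ℝ)) = 1 / 2 * ((b : ℝ) / 2 + 1) := by
        rw [hbk] at hbne ⊢
        field_simp
        ring
      calc ((w₀ : ℝ) + 1) / b * (((b : ℝ) - (w₀ : ℝ)) / (b : ℝ) ^ m)
          = (((w₀ : ℝ) + 1) / b * ((b : ℝ) - (w₀ : ℝ))) * (1 / (b : ℝ) ^ m) := by ring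
        _ = 1 / 2 * ((b : ℝ) / 2 + 1) * (1 / (b : ℝ) ^ m) := by rw [hmain]
    · rw [if_neg (Nat.not_even_iff_odd.mpr hod)]
      obtain ⟨k, hk⟩ := hod
      have hbk : (b : ℝ) = 2 * (w₀ : ℝ) + 1 := by
        have : b = 2 * w₀ + 1 := by omega
        exact_mod_cast this
      have hmain : ((w₀ : ℝ) + 1) / b * ((b : ℝ) - (w₀ : ℝ)) =
          1 / (b : ℝ) * (((b : ℝ) + 1) / 2) ^ 2 := by
        rw [hbk] at hbne ⊢
        field_simp
        ring
      calc ((w₀ : ℝ) + 1) / b * (((b : ℝ) - (w₀ : ℝ)) / (b : ℝ) ^ m)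
          = (((w₀ : ℝ) + 1) / b * ((b : ℝ) - (w₀ : ℝ))) * (1 / (b : ℝ) ^ m) := by ring
        _ = 1 / (b : ℝ) * (((b : ℝ) + 1) / 2) ^ 2 * (1 / (b : ℝ) ^ m) := by rw [hmain]
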